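/- (Additive decomposition of traces under congruence) Let $X_\ell = f_\ell^{1/2} W_\ell f_\ell^{1/2}$ for HPD matrices $f_\ell, W_\ell$, $\ell = 1,\dots,2^J$. Then for the midpoint pyramids built from $(X_\ell)$, $(f_\ell)$, $(W_\ell)$ respectively, at every scale-location $(j,k)$: $\mathrm{Tr}(\mathrm{Log}(M^X_{j,k})) = \mathrm{Tr}(\mathrm{Log}(M^f_{j,k})) + \mathrm{Tr}(\mathrm{Log}(M^W_{j,k}))$. -/

import Mathlib

set_option maxHeartbeats 800000

open Matrix
open scoped ComplexOrder Classical

variable {d : ℕ}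

/-- Frobenius norm of a complex matrix. -/
noncomputable def frob (A : Matrix (Fin d) (Fin d) ℂ) : ℝ :=
  Real.sqrt (∑ i, ∑ j, ‖A i j‖ ^ 2)

/-- The unique positive semidefinite square root (junk value `0` if not PSD). -/

noncomputable def msqrt (A : Matrix (Fin d) (Fin d) ℂ) : Matrix (Fin d) (Fin d) ℂ :=
  if h : A.PosSemidef then
    (h.1.eigenvectorUnitary : Matrix (Fin d) (Fin d) ℂ) *
      Matrix.diagonal (fun i => ((Real.sqrt (h.1.eigenvalues i) : ℝ) : ℂ)) *
      star (h.1.eigenvectorUnitary : Matrix (Fin d) (Fin d) ℂ)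
  else 0

/-- Principal matrix logarithm of a Hermitian (positive definite) matrix, via the
spectral decomposition (junk value `0` otherwise). -/

noncomputable def mLog (A : Matrix (Fin d) (Fin d) ℂ) : Matrix (Fin d) (Fin d) ℂ :=
  if h : A.IsHermitian then
    (h.eigenvectorUnitary : Matrix (Fin d) (Fin d) ℂ) *
      Matrix.diagonal (fun i => (Real.log (h.eigenvalues i) : ℂ)) *
      star (h.eigenvectorUnitary : Matrix (Fin d) (Fin d) ℂ)
  else 0

/-- Matrix exponential. -/
noncomputable def mExp (A : Matrix (Fin d) (Fin d) ℂ) : Matrix (Fin d) (Fin d) ℂ :=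
  NormedSpace.exp A

/-- Real power of an HPD matrix: `X^t = Exp(t Log X)`. -/
noncomputable def mpow (A : Matrix (Fin d) (Fin d) ℂ) (t : ℝ) : Matrix (Fin d) (Fin d) ℂ :=
  mExp ((t : ℂ) • mLog A)

/-- Affine-invariant Riemannian distance on HPD matrices. -/
noncomputable def rdist (p q : Matrix (Fin d) (Fin d) ℂ) : ℝ :=
  frob (mLog ((msqrt p)⁻¹ * q * (msqrt p)⁻¹))

/-- Geodesic midpoint of two HPD matrices. -/
noncomputable def mid (p q : Matrix (Fin d) (Fin d) ℂ) : Matrix (Fin d) (Fin d) ℂ :=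
  msqrt p * msqrt ((msqrt p)⁻¹ * q * (msqrt p)⁻¹) * msqrt p

/-- Riemannian exponential map at `p`. -/
noncomputable def rExp (p h : Matrix (Fin d) (Fin d) ℂ) : Matrix (Fin d) (Fin d) ℂ :=
  msqrt p * mExp ((msqrt p)⁻¹ * h * (msqrt p)⁻¹) * msqrt p

/-- Riemannian logarithm map at `p`. -/
noncomputable def rLog (p q : Matrix (Fin d) (Fin d) ℂ) : Matrix (Fin d) (Fin d) ℂ :=
  msqrt p * mLog ((msqrt p)⁻¹ * q * (msqrt p)⁻¹) * msqrt p

/-- The midpoint pyramid: `pyramid X m k` is the repeated geodesic midpoint of the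
`2^m` data points `X (2^m k), …, X (2^m k + 2^m - 1)` (i.e. the scale `J - m` midpoint
`M_{J-m,k}` built from data at the finest scale `J`). -/
noncomputable def pyramid {d : ℕ} (X : ℕ → Matrix (Fin d) (Fin d) ℂ) :
    ℕ → ℕ → Matrix (Fin d) (Fin d) ℂ
  | 0, k => X k
  | m + 1, k => mid (pyramid X m (2 * k)) (pyramid X m (2 * k + 1))

/-!
For HPD `A`, `Tr (Log A) = log det A`, since both are the sum of the logarithms of the
eigenvalues. The determinant is multiplicative, so `det (f^{1/2} W f^{1/2}) = det f * det W`, and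
`det (Mid p q) ^ 2 = det p * det q`, so `log det` is affine along geodesic midpoints. Hence
`log det` splits additively at the finest scale and every midpoint step preserves the splitting.
-/

section

variable {A B p q : Matrix (Fin d) (Fin d) ℂ}

lemma msqrt_eq_conj (hA : A.PosSemidef) :
    msqrt A = Unitary.conjStarAlgAut ℂ _ hA.1.eigenvectorUnitary
      (diagonal fun i => ((Real.sqrt (hA.1.eigenvalues i) : ℝ) : ℂ)) :=
  dif_pos hA

lemma msqrt_mul_self (hA : A.PosSemidef) : msqrt A * msqrt A = A := by
  conv_rhs => rw [hA.1.spectral_theorem]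
  rw [msqrt_eq_conj hA, ← map_mul, diagonal_mul_diagonal]
  congr 2
  funext i
  rw [← Complex.ofReal_mul, Real.mul_self_sqrt (hA.eigenvalues_nonneg i)]
  rfl

lemma det_msqrt_sq (hA : A.PosSemidef) : (msqrt A).det ^ 2 = A.det := by
  rw [sq, ← det_mul, msqrt_mul_self hA]

lemma posDef_msqrt (hA : A.PosDef) : (msqrt A).PosDef := by
  rw [msqrt_eq_conj hA.posSemidef, Unitary.conjStarAlgAut_apply,
    IsUnit.posDef_star_right_conjugate_iff Unitary.isUnit_coe, posDef_diagonal_iff]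
  exact fun i => Complex.zero_lt_real.mpr (Real.sqrt_pos.mpr (hA.eigenvalues_pos i))

lemma Matrix.PosDef.mul_mul_of_isHermitian (hA : A.PosDef) (hB : B.IsHermitian) (hBu : IsUnit B) :
    (B * A * B).PosDef := by
  simpa only [hB.eq] using
    hA.conjTranspose_mul_mul_same (B := B) (mulVec_injective_iff_isUnit.mpr hBu)

lemma Matrix.PosSemidef.mul_mul_of_isHermitian (hA : A.PosSemidef) (hB : B.IsHermitian) :
    (B * A * B).PosSemidef := by
  simpa only [hB.eq] using hA.conjTranspose_mul_mul_same B

lemma posDef_mid (hp : p.PosDef) (hq : q.PosDef) : (mid p q).PosDef := by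
  have hs := posDef_msqrt hp
  exact (posDef_msqrt (hq.mul_mul_of_isHermitian hs.inv.1 hs.inv.isUnit)).mul_mul_of_isHermitian
    hs.1 hs.isUnit

lemma det_mid_sq (hp : p.PosDef) (hq : q.PosSemidef) : (mid p q).det ^ 2 = p.det * q.det := by
  have hs := posDef_msqrt hp
  have hdet : (msqrt p).det ≠ 0 := hs.det_pos.ne'
  rw [mid, det_mul, det_mul, mul_pow, mul_pow,
    det_msqrt_sq (hq.mul_mul_of_isHermitian hs.inv.1), det_mul, det_mul, det_nonsing_inv,
    Ring.inverse_eq_inv, ← det_msqrt_sq hp.posSemidef]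
  field_simp

lemma Matrix.PosDef.det_eq_re (hA : A.PosDef) : A.det = (A.det.re : ℂ) :=
  Complex.eq_re_of_ofReal_le (r := 0) (by simpa using hA.det_pos.le)

lemma Matrix.PosDef.re_det_pos (hA : A.PosDef) : 0 < A.det.re :=
  (Complex.pos_iff.mp hA.det_pos).1

lemma Matrix.PosDef.re_det_eq_prod_eigenvalues (hA : A.PosDef) :
    A.det.re = ∏ i, hA.1.eigenvalues i := by
  rw [hA.1.det_eq_prod_eigenvalues]
  norm_cast

lemma trace_mLog (hA : A.PosDef) : (mLog A).trace = Real.log A.det.re := by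
  rw [hA.re_det_eq_prod_eigenvalues, Real.log_prod fun i _ => (hA.eigenvalues_pos i).ne',
    mLog, dif_pos hA.1, trace_mul_cycle, Unitary.coe_star_mul_self, one_mul, trace_diagonal]
  push_cast
  rfl

lemma log_re_det_mid (hp : p.PosDef) (hq : q.PosDef) :
    Real.log (mid p q).det.re = (Real.log p.det.re + Real.log q.det.re) / 2 := by
  have hm := posDef_mid hp hq
  have hsq : (mid p q).det.re ^ 2 = p.det.re * q.det.re := by
    have h := det_mid_sq hp hq.posSemidef
    rw [hm.det_eq_re, hp.det_eq_re, hq.det_eq_re] at h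
    exact_mod_cast h
  have hlog := congrArg Real.log hsq
  rw [Real.log_pow, Real.log_mul hp.re_det_pos.ne' hq.re_det_pos.ne'] at hlog
  push_cast at hlog
  linarith

lemma det_msqrt_mul_mul_msqrt (hA : A.PosSemidef) (B : Matrix (Fin d) (Fin d) ℂ) :
    (msqrt A * B * msqrt A).det = A.det * B.det := by
  rw [det_mul, det_mul, ← det_msqrt_sq hA]
  ring

lemma log_re_det_msqrt_mul_mul_msqrt (hA : A.PosDef) (hB : B.PosDef) :
    Real.log (msqrt A * B * msqrt A).det.re = Real.log A.det.re + Real.log B.det.re := by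
  conv_lhs => rw [det_msqrt_mul_mul_msqrt hA.posSemidef, hA.det_eq_re, hB.det_eq_re,
    ← Complex.ofReal_mul, Complex.ofReal_re]
  exact Real.log_mul hA.re_det_pos.ne' hB.re_det_pos.ne'

end

lemma pyramid_posDef {X : ℕ → Matrix (Fin d) (Fin d) ℂ} (hX : ∀ ℓ, (X ℓ).PosDef) :
    ∀ m k, (pyramid X m k).PosDef
  | 0, k => hX k
  | m + 1, k => posDef_mid (pyramid_posDef hX m (2 * k)) (pyramid_posDef hX m (2 * k + 1))

lemma map_pyramid_eq_add {φ : Matrix (Fin d) (Fin d) ℂ → ℝ}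
    (hφ : ∀ p q, p.PosDef → q.PosDef → φ (mid p q) = (φ p + φ q) / 2)
    {f W X : ℕ → Matrix (Fin d) (Fin d) ℂ} (hf : ∀ ℓ, (f ℓ).PosDef) (hW : ∀ ℓ, (W ℓ).PosDef)
    (hX : ∀ ℓ, (X ℓ).PosDef) (hsplit : ∀ ℓ, φ (X ℓ) = φ (f ℓ) + φ (W ℓ)) (m k : ℕ) :
    φ (pyramid X m k) = φ (pyramid f m k) + φ (pyramid W m k) := by
  induction m generalizing k with
  | zero => exact hsplit k
  | succ m ih =>
    simp only [pyramid, hφ _ _ (pyramid_posDef hX _ _) (pyramid_posDef hX _ _),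
      hφ _ _ (pyramid_posDef hf _ _) (pyramid_posDef hf _ _),
      hφ _ _ (pyramid_posDef hW _ _) (pyramid_posDef hW _ _), ih]
    ring

/-- additive decomposition of traces under congruence. If
`X_ℓ = f_ℓ^{1/2} W_ℓ f_ℓ^{1/2}` then the traces of the logs of the midpoint pyramids satisfy
`Tr(Log M^X_{j,k}) = Tr(Log M^f_{j,k}) + Tr(Log M^W_{j,k})` at every scale-location. -/
theorem trace_log_pyramid_additive {d : ℕ}
    (f W X : ℕ → Matrix (Fin d) (Fin d) ℂ)
    (hf : ∀ ℓ, (f ℓ).PosDef) (hW : ∀ ℓ, (W ℓ).PosDef)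
    (hX : ∀ ℓ, X ℓ = msqrt (f ℓ) * W ℓ * msqrt (f ℓ)) (m k : ℕ) :
    (mLog (pyramid X m k)).trace =
      (mLog (pyramid f m k)).trace + (mLog (pyramid W m k)).trace := by
  have hXpos : ∀ ℓ, (X ℓ).PosDef := fun ℓ => hX ℓ ▸
    (hW ℓ).mul_mul_of_isHermitian (posDef_msqrt (hf ℓ)).1 (posDef_msqrt (hf ℓ)).isUnit
  have hlogdet := map_pyramid_eq_add (φ := fun A => Real.log A.det.re)
    (fun _ _ => log_re_det_mid) hf hW hXpos
    (fun ℓ => hX ℓ ▸ log_re_det_msqrt_mul_mul_msqrt (hf ℓ) (hW ℓ)) m k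
  rw [trace_mLog (pyramid_posDef hXpos m k), trace_mLog (pyramid_posDef hf m k),
    trace_mLog (pyramid_posDef hW m k), hlogdet, Complex.ofReal_add]
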